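/- Let x : V → ℝ≥0 and P : V → V → ℝ row-stochastic with entries in [0,1]. For D ⊆ V × V define ρ(u,D) = ∑_{(u,v)∈D} P(u,v) (sum over edges in D outgoing from u), and assume ρ(u,D) < 1 for all u. Then the expected uncertainty after monitoring edges D, namely ∑_{u} x(u)(1-ρ(u,D)) ∑_{(u,v)∉D} (P(u,v)/(1-ρ(u,D)))(1 - P(u,v)/(1-ρ(u,D))), is at most the initial uncertainty ∑_{u} x(u) ∑_{v} P(u,v)(1-P(u,v)). -/

import Mathlib

/-! Per node, with `c = 1 - ρ(u,D) ∈ (0,1]`, rescaling gives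
`c · (p/c)(1 - p/c) = p - p²/c ≤ p(1 - p)` for every unmonitored edge, and the monitored
edges only remove the nonnegative terms `p(1 - p)`, `0 ≤ p ≤ 1`. -/

open Finset

lemma mul_div_mul_one_sub_div_le {a c : ℝ} (hc0 : 0 < c) (hc1 : c ≤ 1) :
    c * (a / c * (1 - a / c)) ≤ a * (1 - a) := by
  have hsq : a ^ 2 ≤ a ^ 2 / c := le_div_self (sq_nonneg a) hc0 hc1
  calc c * (a / c * (1 - a / c)) = a - a ^ 2 / c := by field_simp
    _ ≤ a - a ^ 2 := by linarith
    _ = a * (1 - a) := by ring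

lemma mul_sum_div_mul_one_sub_div_le {ι : Type*} [Fintype ι] {p : ι → ℝ} {c : ℝ}
    (hp0 : ∀ i, 0 ≤ p i) (hp1 : ∀ i, p i ≤ 1) (hc0 : 0 < c) (hc1 : c ≤ 1) (s : Finset ι) :
    c * ∑ i ∈ s, p i / c * (1 - p i / c) ≤ ∑ i, p i * (1 - p i) :=
  calc c * ∑ i ∈ s, p i / c * (1 - p i / c)
      ≤ ∑ i ∈ s, p i * (1 - p i) := by
        rw [mul_sum]
        exact sum_le_sum fun i _ => mul_div_mul_one_sub_div_le hc0 hc1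
    _ ≤ ∑ i, p i * (1 - p i) :=
        sum_le_sum_of_subset_of_nonneg (subset_univ s) fun i _ _ =>
          mul_nonneg (hp0 i) (sub_nonneg.mpr (hp1 i))

theorem edgeTransitions_decreases_uncertainty_general
    {V : Type*} [Fintype V] [DecidableEq V]
    (x : V → ℝ) (hx : ∀ u, 0 ≤ x u)
    (P : V → V → ℝ) (hP0 : ∀ u v, 0 ≤ P u v) (hP1 : ∀ u v, P u v ≤ 1)
    (D : Finset (V × V))
    (hρ : ∀ u, ∑ v ∈ univ.filter (fun v => (u, v) ∈ D), P u v < 1) :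
    ∑ u, x u * (1 - ∑ v ∈ univ.filter (fun v => (u, v) ∈ D), P u v) *
        ∑ v ∈ univ.filter (fun v => (u, v) ∉ D),
          (P u v / (1 - ∑ w ∈ univ.filter (fun w => (u, w) ∈ D), P u w)) *
            (1 - P u v / (1 - ∑ w ∈ univ.filter (fun w => (u, w) ∈ D), P u w))
      ≤ ∑ u, x u * ∑ v, P u v * (1 - P u v) := by
  refine sum_le_sum fun u _ => ?_
  have hρ0 : 0 ≤ ∑ v ∈ univ.filter (fun v => (u, v) ∈ D), P u v :=
    sum_nonneg fun v _ => hP0 u v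
  rw [mul_assoc]
  exact mul_le_mul_of_nonneg_left
    (mul_sum_div_mul_one_sub_div_le (hP0 u) (hP1 u) (by linarith [hρ u]) (by linarith) _)
    (hx u)

theorem edgeTransitions_decreases_uncertainty
    {V : Type*} [Fintype V] [DecidableEq V]
    (x : V → ℝ) (hx : ∀ u, 0 ≤ x u)
    (P : V → V → ℝ) (hP0 : ∀ u v, 0 ≤ P u v) (hP1 : ∀ u v, P u v ≤ 1)
    (hrow : ∀ u, ∑ v, P u v = 1)
    (D : Finset (V × V))
    (hρ : ∀ u, ∑ v ∈ univ.filter (fun v => (u, v) ∈ D), P u v < 1) :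
    ∑ u, x u * (1 - ∑ v ∈ univ.filter (fun v => (u, v) ∈ D), P u v) *
        ∑ v ∈ univ.filter (fun v => (u, v) ∉ D),
          (P u v / (1 - ∑ w ∈ univ.filter (fun w => (u, w) ∈ D), P u w)) *
            (1 - P u v / (1 - ∑ w ∈ univ.filter (fun w => (u, w) ∈ D), P u w))
      ≤ ∑ u, x u * ∑ v, P u v * (1 - P u v) :=
  edgeTransitions_decreases_uncertainty_general x hx P hP0 hP1 D hρ
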